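/- Let (C, Δ, δ) be a coalgebra and suppose every element of C lies in a finite-dimensional sub-coalgebra (Fundamental Theorem of Coalgebras). Then for every linear functional ψ on C and every c ∈ C, the series e_⋆^ψ(c) := Σ_{n≥0} ψ^{⋆n}(c)/n! converges in ℂ, where ψ^{⋆0} = δ and ψ^{⋆(n+1)} = ψ^{⋆n} ⋆ ψ; moreover e_⋆^ψ(c) = δ(e^{T(ψ)} c) where e^{T(ψ)} is computed on any finite-dimensional sub-coalgebra containing c. -/

import Mathlib

open TensorProduct

/-- The operator `T ψ = (id ⊗ ψ) ∘ Δ` on a coalgebra. -/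
noncomputable def opT {A : Type*} [AddCommGroup A] [Module ℂ A] [Coalgebra ℂ A]
    (ψ : A →ₗ[ℂ] ℂ) : A →ₗ[ℂ] A :=
  (TensorProduct.rid ℂ A).toLinearMap ∘ₗ
    (TensorProduct.map LinearMap.id ψ) ∘ₗ Coalgebra.comul

/-- Convolution `φ ⋆ ψ = (φ ⊗ ψ) ∘ Δ` of linear functionals on a coalgebra. -/
noncomputable def conv {A : Type*} [AddCommGroup A] [Module ℂ A] [Coalgebra ℂ A]
    (φ ψ : A →ₗ[ℂ] ℂ) : A →ₗ[ℂ] ℂ :=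
  (LinearMap.mul' ℂ ℂ) ∘ₗ (TensorProduct.map φ ψ) ∘ₗ Coalgebra.comul

/-- Convolution powers: `ψ^{⋆0} = δ`, `ψ^{⋆(n+1)} = ψ^{⋆n} ⋆ ψ`. -/
noncomputable def convPow {A : Type*} [AddCommGroup A] [Module ℂ A] [Coalgebra ℂ A]
    (ψ : A →ₗ[ℂ] ℂ) : ℕ → (A →ₗ[ℂ] ℂ)
  | 0 => Coalgebra.counit
  | n + 1 => conv (convPow ψ n) ψ

/-!
Convolving with `ψ` on the right is precomposition with `T ψ = (id ⊗ ψ) ∘ Δ`, so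
`ψ^{⋆n} = δ ∘ (T ψ)ⁿ` and the two series agree term by term. On a finite-dimensional
sub-coalgebra `D ∋ c`, which `T ψ` preserves, `Σ δ((T ψ)ⁿ c)/n!` is a coordinate of the
exponential series of a bounded operator and therefore converges.
-/

section ExpSeries

variable {𝕜 : Type*} [RCLike 𝕜]

theorem ContinuousLinearMap.summable_apply_pow_div_factorial {E : Type*}
    [NormedAddCommGroup E] [NormedSpace 𝕜 E] [CompleteSpace E]
    (f : StrongDual 𝕜 E) (T : E →L[𝕜] E) (v : E) :
    Summable fun n : ℕ => f ((T ^ n) v) / (n.factorial : 𝕜) := by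
  have h := (NormedSpace.expSeries_summable' (𝕂 := 𝕜) T).mapL
    (f.comp (ContinuousLinearMap.apply 𝕜 E v))
  refine h.congr fun n => ?_
  simp [div_eq_inv_mul]

theorem Module.End.summable_apply_pow_div_factorial {V : Type*} [AddCommGroup V]
    [Module 𝕜 V] [FiniteDimensional 𝕜 V] (f : V →ₗ[𝕜] 𝕜) (T : Module.End 𝕜 V) (v : V) :
    Summable fun n : ℕ => f ((T ^ n) v) / (n.factorial : 𝕜) := by
  let e := (Module.finBasis 𝕜 V).equivFun
  let S := e.conjAlgEquiv 𝕜 T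
  have hpow (n : ℕ) : (T ^ n) v = e.symm ((S ^ n) (e v)) := by
    rw [← map_pow, LinearEquiv.conjAlgEquiv_apply]
    simp
  refine (ContinuousLinearMap.summable_apply_pow_div_factorial
    (LinearMap.toContinuousLinearMap (f ∘ₗ e.symm.toLinearMap))
    (LinearMap.toContinuousLinearMap S) (e v)).congr fun n => ?_
  simp [hpow, ← Module.End.coe_pow]

theorem Module.End.summable_apply_pow_div_factorial_of_mapsTo {V : Type*} [AddCommGroup V]
    [Module 𝕜 V] (f : V →ₗ[𝕜] 𝕜) (T : Module.End 𝕜 V) {D : Submodule 𝕜 V}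
    [FiniteDimensional 𝕜 D] (hT : ∀ x ∈ D, T x ∈ D) {v : V} (hv : v ∈ D) :
    Summable fun n : ℕ => f ((T ^ n) v) / (n.factorial : 𝕜) := by
  have hpow (n : ℕ) : (T ^ n) v = ((T.restrict hT ^ n) ⟨v, hv⟩ : V) := by
    rw [Module.End.pow_restrict, LinearMap.restrict_apply]
  refine (Module.End.summable_apply_pow_div_factorial (f ∘ₗ D.subtype) (T.restrict hT)
    ⟨v, hv⟩).congr fun n => ?_
  rw [hpow, LinearMap.comp_apply, Submodule.subtype_apply]

end ExpSeries

section Coalgebra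

variable {A : Type*} [AddCommGroup A] [Module ℂ A] [Coalgebra ℂ A]

theorem conv_eq_comp_opT (φ ψ : A →ₗ[ℂ] ℂ) : conv φ ψ = φ ∘ₗ opT ψ := by
  ext c
  simp only [conv, opT, LinearMap.comp_apply]
  induction Coalgebra.comul (R := ℂ) c using TensorProduct.induction_on with
  | zero => simp
  | tmul a b => simp [mul_comm]
  | add x y hx hy => simp_all

theorem convPow_eq_counit_comp_opT_pow (ψ : A →ₗ[ℂ] ℂ) (n : ℕ) :
    convPow ψ n = Coalgebra.counit ∘ₗ opT ψ ^ n := by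
  induction n with
  | zero => rfl
  | succ n ih => rw [convPow, conv_eq_comp_opT, ih, pow_succ, Module.End.mul_eq_comp,
      LinearMap.comp_assoc]

theorem opT_mem_of_comul_mem_range (ψ : A →ₗ[ℂ] ℂ) {D : Submodule ℂ A} {d : A}
    (hd : Coalgebra.comul d ∈ LinearMap.range (TensorProduct.map D.subtype D.subtype)) :
    opT ψ d ∈ D := by
  obtain ⟨t, ht⟩ := hd
  simp only [opT, LinearMap.comp_apply, ← ht]
  clear ht
  induction t using TensorProduct.induction_on with
  | zero => simp
  | tmul a b => simpa using D.smul_mem (ψ b) a.2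
  | add x y hx hy => simpa using D.add_mem hx hy

end Coalgebra

/-- if every element lies in a finite-dimensional sub-coalgebra
(Fundamental Theorem of Coalgebras), the convolution exponential series
`e_⋆^ψ(c) = Σ ψ^{⋆n}(c)/n!` converges and equals `δ(e^{T(ψ)} c)`
(the latter written as the convergent series `Σ δ(T(ψ)ⁿ c)/n!`). -/
theorem stmt7 {A : Type*} [AddCommGroup A] [Module ℂ A] [Coalgebra ℂ A]
    (hFT : ∀ c : A, ∃ D : Submodule ℂ A, FiniteDimensional ℂ D ∧ c ∈ D ∧
      ∀ d ∈ D, Coalgebra.comul d ∈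
        LinearMap.range (TensorProduct.map D.subtype D.subtype))
    (ψ : A →ₗ[ℂ] ℂ) (c : A) :
    Summable (fun n : ℕ => convPow ψ n c / (n.factorial : ℂ))
      ∧ Summable (fun n : ℕ => Coalgebra.counit ((opT ψ ^ n) c) / (n.factorial : ℂ))
      ∧ ∑' n : ℕ, convPow ψ n c / (n.factorial : ℂ)
          = ∑' n : ℕ, Coalgebra.counit ((opT ψ ^ n) c) / (n.factorial : ℂ) := by
  obtain ⟨D, hD, hc, hcomul⟩ := hFT c
  have hconv (n : ℕ) : convPow ψ n c = Coalgebra.counit ((opT ψ ^ n) c) := by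
    rw [convPow_eq_counit_comp_opT_pow, LinearMap.comp_apply]
  have hsum := Module.End.summable_apply_pow_div_factorial_of_mapsTo Coalgebra.counit (opT ψ)
    (fun d hd => opT_mem_of_comul_mem_range ψ (hcomul d hd)) hc
  simp only [hconv, and_self, and_true]
  exact hsum
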